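/- Suppose each G_j and each h_j is Lipschitz continuous, |h_j(x)| ≤ M and every component of G_j(x) is bounded by M in absolute value on 𝒳. Let θ^c ∈ Θ, r^c ∈ [0,1], λ₀ > 0, and suppose there exist constants γ > 0, p ≥ 1, γ' > 0, p' ≥ 1 such that for all λ ∈ (0, λ₀]: ψ_x^λ(τ) ≥ γ τ^p for all x ∈ 𝒳, τ ≥ 0 (lower-level growth functions taken at (θ^c, r^c) and at the perturbed parameters below), and ψ^λ_{θ^c,r^c}(τ) ≥ γ' τ^{p'} for all τ ≥ 0. Then for all sequences λ_k ↓ 0, θ̃_k ∈ Θ with ‖θ̃_k − θ^c‖_∞ → 0, and r̃_k ∈ [0,1] with r̃_k → r^c, one has 𝔻( 𝔛^{λ_k}(θ̃_k, r̃_k), 𝔛^{λ_k}(θ^c, r^c) ) → 0 as k → ∞. -/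

import Mathlib

open Set Filter MeasureTheory
open scoped ENNReal

noncomputable section

/-- The probability simplex Θ in ℝⁿ. -/
def simplex (n : ℕ) : Set (Fin n → ℝ) := {θ | ∑ j, θ j = 1 ∧ ∀ j, 0 ≤ θ j}

/-- Ambiguity set `𝔹∞(c, r) ∩ Θ`.  (The norm on `Fin n → ℝ` is the sup norm.) -/
def amb {n : ℕ} (c : Fin n → ℝ) (r : ℝ) : Set (Fin n → ℝ) :=
  {θ | ‖θ - c‖ ≤ r} ∩ simplex n

/-- Regularized lower-level objective `∑_j θ_j h_j(x) − λ‖θ‖²` (Euclidean norm squared). -/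
def obj {n d : ℕ} (h : Fin n → (Fin d → ℝ) → ℝ) (lam : ℝ) (x : Fin d → ℝ)
    (θ : Fin n → ℝ) : ℝ :=
  (∑ j, θ j * h j x) - lam * ∑ j, (θ j) ^ 2

/-- Optimal value `ν^λ(x, c, r)` of the regularized lower-level problem. -/
def nuval {n d : ℕ} (h : Fin n → (Fin d → ℝ) → ℝ) (lam : ℝ) (x : Fin d → ℝ)
    (c : Fin n → ℝ) (r : ℝ) : ℝ :=
  sSup (obj h lam x '' amb c r)

/-- Maximizer set `ϑ^λ(x, c, r)` of the regularized lower-level problem. -/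
def argmaxSet {n d : ℕ} (h : Fin n → (Fin d → ℝ) → ℝ) (lam : ℝ) (x : Fin d → ℝ)
    (c : Fin n → ℝ) (r : ℝ) : Set (Fin n → ℝ) :=
  {θ ∈ amb c r | obj h lam x θ = nuval h lam x c r}

/-- Normal cone of `X` at `x` (standard inner product on ℝ^d). -/
def normalCone {d : ℕ} (X : Set (Fin d → ℝ)) (x : Fin d → ℝ) : Set (Fin d → ℝ) :=
  {v | ∀ y ∈ X, ∑ i, v i * (y i - x i) ≤ 0}

/-- x-solution set `𝔛^λ(c, r)` of the (regularized) Bayesian DRVI. -/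
def solSet {n d : ℕ} (G : Fin n → (Fin d → ℝ) → Fin d → ℝ)
    (h : Fin n → (Fin d → ℝ) → ℝ) (lam : ℝ) (X : Set (Fin d → ℝ))
    (c : Fin n → ℝ) (r : ℝ) : Set (Fin d → ℝ) :=
  {x ∈ X | ∃ θ ∈ argmaxSet h lam x c r,
      ∀ y ∈ X, 0 ≤ ∑ i, (∑ j, θ j * G j x i) * (y i - x i)}

/-- One-sided deviation `𝔻(S, T)` (the metric of the Pi type is the sup metric). -/
def dev {α : Type*} [PseudoMetricSpace α] (S T : Set α) : ℝ :=
  sSup ((fun s => Metric.infDist s T) '' S)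

/-- One-sided deviation with values in `ℝ≥0∞`. -/
def devE {α : Type*} [PseudoMetricSpace α] (S T : Set α) : ℝ≥0∞ :=
  ⨆ s ∈ S, ENNReal.ofReal (Metric.infDist s T)

/-- Lower-level growth function `ψ_x^λ` at parameters `(c, r)`
(values in `[0,∞]`; the infimum over the empty set is `⊤`). -/
def psiLow {n d : ℕ} (h : Fin n → (Fin d → ℝ) → ℝ) (lam : ℝ) (x : Fin d → ℝ)
    (c : Fin n → ℝ) (r : ℝ) (τ : ℝ) : ℝ≥0∞ :=
  ⨅ θ ∈ {θ ∈ amb c r | τ ≤ Metric.infDist θ (argmaxSet h lam x c r)},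
    ENNReal.ofReal (nuval h lam x c r - obj h lam x θ)

/-- Generalized inverse `(ψ_x^λ)⁻¹(t) = sup{τ ≥ 0 : ψ_x^λ(τ) ≤ t}`. -/
def psiLowInv {n d : ℕ} (h : Fin n → (Fin d → ℝ) → ℝ) (lam : ℝ) (x : Fin d → ℝ)
    (c : Fin n → ℝ) (r : ℝ) (t : ℝ) : ℝ≥0∞ :=
  ⨆ τ ∈ {τ : ℝ | 0 ≤ τ ∧ psiLow h lam x c r τ ≤ ENNReal.ofReal t}, ENNReal.ofReal τ

/-- `Ψ_x^λ(η) = η + (ψ_x^λ)⁻¹(2η)`. -/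
def PsiLow {n d : ℕ} (h : Fin n → (Fin d → ℝ) → ℝ) (lam : ℝ) (x : Fin d → ℝ)
    (c : Fin n → ℝ) (r : ℝ) (η : ℝ) : ℝ≥0∞ :=
  ENNReal.ofReal η + psiLowInv h lam x c r (2 * η)

/-- Residual `d(0, ∑_j θ_j G_j(x) + N_X(x))` (ℓ∞ distance). -/
def resid {n d : ℕ} (G : Fin n → (Fin d → ℝ) → Fin d → ℝ) (X : Set (Fin d → ℝ))
    (x : Fin d → ℝ) (θ : Fin n → ℝ) : ℝ :=
  Metric.infDist (0 : Fin d → ℝ)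
    ((fun w => (fun i => ∑ j, θ j * G j x i) + w) '' normalCone X x)

/-- Solution-set growth function `ψ^λ_{c,r}` (values in `[0,∞]`). -/
def psiSol {n d : ℕ} (G : Fin n → (Fin d → ℝ) → Fin d → ℝ)
    (h : Fin n → (Fin d → ℝ) → ℝ) (lam : ℝ) (X : Set (Fin d → ℝ))
    (c : Fin n → ℝ) (r : ℝ) (τ : ℝ) : ℝ≥0∞ :=
  ⨅ x ∈ {x ∈ X | τ ≤ Metric.infDist x (solSet G h lam X c r)},
    ⨅ θ ∈ argmaxSet h lam x c r, ENNReal.ofReal (resid G X x θ)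

/-- Generalized inverse `(ψ^λ_{c,r})⁻¹(t) = sup{τ ≥ 0 : ψ^λ_{c,r}(τ) ≤ t}`. -/
def psiSolInv {n d : ℕ} (G : Fin n → (Fin d → ℝ) → Fin d → ℝ)
    (h : Fin n → (Fin d → ℝ) → ℝ) (lam : ℝ) (X : Set (Fin d → ℝ))
    (c : Fin n → ℝ) (r : ℝ) (t : ℝ) : ℝ≥0∞ :=
  ⨆ τ ∈ {τ : ℝ | 0 ≤ τ ∧ psiSol G h lam X c r τ ≤ ENNReal.ofReal t}, ENNReal.ofReal τ

/-!
Let `x` be a contaminated solution with multiplier `θ ∈ ϑ^λ(x, θ̃, r̃)` and put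
`e = ‖θ̃ - θᶜ‖ + |r̃ - rᶜ|`. Radially retracting `θ` into `Θ̂(θᶜ, rᶜ)` moves it by at most `e`;
since the lower-level objective is Lipschitz on `Θ` with a constant `L` uniform in `x` and in
`λ ≤ λ₀`, the retracted point is a `2Le`-maximizer, so lower-level growth puts a true maximizer
`θ*` within `(2Le/γ)^(1/p) + e` of `θ`. As `θ` solves the variational inequality at `x`, the
residual of `x` with `θ*` is at most `nM‖θ* - θ‖`, and solution-set growth turns this into
`d(x, 𝔛^λ(θᶜ, rᶜ)) ≤ (nM((2Le/γ)^(1/p) + e)/γ')^(1/p')`, a bound uniform in `x` and `λ`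
that vanishes with `e`.
-/

theorem Convex.exists_mem_norm_sub_le {E : Type*} [NormedAddCommGroup E] [NormedSpace ℝ E]
    {S : Set E} (hS : Convex ℝ S) {c₁ c₂ θ : E} {r₁ r₂ : ℝ} (hc₂ : c₂ ∈ S) (hr₂ : 0 ≤ r₂)
    (hθ : θ ∈ S) (hθc₁ : ‖θ - c₁‖ ≤ r₁) :
    ∃ θ' ∈ S, ‖θ' - c₂‖ ≤ r₂ ∧ ‖θ' - θ‖ ≤ ‖c₁ - c₂‖ + |r₁ - r₂| := by
  by_cases hθc₂ : ‖θ - c₂‖ ≤ r₂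
  · exact ⟨θ, hθ, hθc₂, by simp only [sub_self, norm_zero]; positivity⟩
  rw [not_le] at hθc₂
  set s := ‖θ - c₂‖
  have hs : 0 < s := hr₂.trans_lt hθc₂
  -- radial retraction of `θ` onto the sphere of radius `r₂` about `c₂`
  refine ⟨c₂ + (r₂ / s) • (θ - c₂),
    hS.add_smul_sub_mem hc₂ hθ ⟨by positivity, (div_le_one hs).2 hθc₂.le⟩, ?_, ?_⟩
  · rw [add_sub_cancel_left, norm_smul, Real.norm_of_nonneg (by positivity),
      div_mul_cancel₀ _ hs.ne']
  · have hretract : c₂ + (r₂ / s) • (θ - c₂) - θ = (1 - r₂ / s) • (c₂ - θ) := by module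
    rw [hretract, norm_smul, Real.norm_of_nonneg (by rw [sub_nonneg, div_le_one hs]; linarith),
      norm_sub_rev, sub_mul, div_mul_cancel₀ _ hs.ne', one_mul]
    have hs_le : s ≤ ‖θ - c₁‖ + ‖c₁ - c₂‖ := norm_sub_le_norm_sub_add_norm_sub _ _ _
    linarith [le_abs_self (r₁ - r₂)]

section

variable {n d : ℕ}

theorem simplex_eq_stdSimplex : simplex n = stdSimplex ℝ (Fin n) := by
  ext θ; simp [simplex, stdSimplex, and_comm]

theorem convex_simplex : Convex ℝ (simplex n) := by
  rw [simplex_eq_stdSimplex]; exact convex_stdSimplex ℝ _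

theorem isCompact_simplex : IsCompact (simplex n) := by
  rw [simplex_eq_stdSimplex]; exact isCompact_stdSimplex _ _

theorem pos_of_mem_simplex {θ : Fin n → ℝ} (hθ : θ ∈ simplex n) : 0 < n := by
  rcases Nat.eq_zero_or_pos n with rfl | hn
  · simpa using hθ.1
  · exact hn

theorem abs_le_one_of_mem_simplex {θ : Fin n → ℝ} (hθ : θ ∈ simplex n) (j : Fin n) :
    |θ j| ≤ 1 := by
  rw [abs_of_nonneg (hθ.2 j), ← hθ.1]
  exact Finset.single_le_sum (fun i _ => hθ.2 i) (Finset.mem_univ j)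

theorem isCompact_amb (c : Fin n → ℝ) (r : ℝ) : IsCompact (amb c r) :=
  isCompact_simplex.inter_left (isClosed_le (by fun_prop) continuous_const)

theorem mem_amb_self {c : Fin n → ℝ} {r : ℝ} (hc : c ∈ simplex n) (hr : 0 ≤ r) :
    c ∈ amb c r :=
  ⟨by simpa using hr, hc⟩

theorem exists_mem_amb_norm_sub_le {c₁ c₂ θ : Fin n → ℝ} {r₁ r₂ : ℝ} (hc₂ : c₂ ∈ simplex n)
    (hr₂ : 0 ≤ r₂) (hθ : θ ∈ amb c₁ r₁) :
    ∃ θ' ∈ amb c₂ r₂, ‖θ' - θ‖ ≤ ‖c₁ - c₂‖ + |r₁ - r₂| := by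
  obtain ⟨θ', hθ'S, hθ'c₂, hθ'θ⟩ := convex_simplex.exists_mem_norm_sub_le hc₂ hr₂ hθ.2 hθ.1
  exact ⟨θ', ⟨hθ'c₂, hθ'S⟩, hθ'θ⟩

theorem abs_sum_sub_mul_le {a b w : Fin n → ℝ} {M : ℝ} (hw : ∀ j, |w j| ≤ M) :
    |∑ j, (a j - b j) * w j| ≤ n * M * ‖a - b‖ :=
  calc |∑ j, (a j - b j) * w j| ≤ ∑ j, |(a j - b j) * w j| := Finset.abs_sum_le_sum_abs _ _
    _ ≤ ∑ _j : Fin n, ‖a - b‖ * M := by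
        refine Finset.sum_le_sum fun j _ => ?_
        rw [abs_mul]
        exact mul_le_mul (by simpa using norm_le_pi_norm (a - b) j) (hw j) (abs_nonneg _)
          (norm_nonneg _)
    _ = n * M * ‖a - b‖ := by
        rw [Finset.sum_const, Finset.card_univ, Fintype.card_fin, nsmul_eq_mul]; ring

section LowerLevel

variable {h : Fin n → (Fin d → ℝ) → ℝ} {lam : ℝ} {x : Fin d → ℝ}

theorem continuous_obj : Continuous (obj h lam x) := by
  unfold obj; fun_prop

theorem obj_sub_obj (θ₁ θ₂ : Fin n → ℝ) :
    obj h lam x θ₁ - obj h lam x θ₂ = ∑ j, (θ₁ j - θ₂ j) * (h j x - lam * (θ₁ j + θ₂ j)) := by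
  simp only [obj, mul_sub, Finset.mul_sum, ← Finset.sum_sub_distrib]
  exact Finset.sum_congr rfl fun j _ => by ring

theorem abs_obj_sub_obj_le {M Λ : ℝ} (hM : ∀ j, |h j x| ≤ M) (hlam : |lam| ≤ Λ)
    {θ₁ θ₂ : Fin n → ℝ} (hθ₁ : θ₁ ∈ simplex n) (hθ₂ : θ₂ ∈ simplex n) :
    |obj h lam x θ₁ - obj h lam x θ₂| ≤ n * (M + 2 * Λ) * ‖θ₁ - θ₂‖ := by
  rw [obj_sub_obj]
  refine abs_sum_sub_mul_le fun j => ?_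
  have hsum : |θ₁ j + θ₂ j| ≤ 2 := by
    linarith [abs_add_le (θ₁ j) (θ₂ j), abs_le_one_of_mem_simplex hθ₁ j,
      abs_le_one_of_mem_simplex hθ₂ j]
  calc |h j x - lam * (θ₁ j + θ₂ j)| ≤ |h j x| + |lam| * |θ₁ j + θ₂ j| := by
        rw [← abs_mul]; exact abs_sub _ _
    _ ≤ M + Λ * 2 := add_le_add (hM j) (mul_le_mul hlam hsum (abs_nonneg _)
        ((abs_nonneg _).trans hlam))
    _ = M + 2 * Λ := by ring

theorem obj_le_nuval {c θ : Fin n → ℝ} {r : ℝ} (hθ : θ ∈ amb c r) :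
    obj h lam x θ ≤ nuval h lam x c r :=
  le_csSup ((isCompact_amb c r).image continuous_obj).bddAbove (mem_image_of_mem _ hθ)

theorem argmaxSet_nonempty {c : Fin n → ℝ} {r : ℝ} (hc : c ∈ simplex n) (hr : 0 ≤ r) :
    (argmaxSet h lam x c r).Nonempty := by
  obtain ⟨θ, hθ, hθmax⟩ := ((isCompact_amb c r).image continuous_obj).sSup_mem
    (Set.Nonempty.image _ ⟨c, mem_amb_self hc hr⟩)
  exact ⟨θ, hθ, hθmax⟩

theorem isCompact_argmaxSet (c : Fin n → ℝ) (r : ℝ) : IsCompact (argmaxSet h lam x c r) :=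
  (isCompact_amb c r).inter_right (isClosed_eq continuous_obj continuous_const)

theorem obj_le_obj_add {M Λ e : ℝ} (hM : ∀ j, |h j x| ≤ M) (hlam : |lam| ≤ Λ)
    {θ₁ θ₂ : Fin n → ℝ} (hθ₁ : θ₁ ∈ simplex n) (hθ₂ : θ₂ ∈ simplex n) (he : ‖θ₁ - θ₂‖ ≤ e) :
    obj h lam x θ₁ ≤ obj h lam x θ₂ + n * (M + 2 * Λ) * e := by
  have hL : 0 ≤ (n : ℝ) * (M + 2 * Λ) := mul_nonneg n.cast_nonneg (by
    linarith [(abs_nonneg _).trans (hM ⟨0, pos_of_mem_simplex hθ₁⟩), (abs_nonneg lam).trans hlam])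
  have hLip := (le_abs_self _).trans (abs_obj_sub_obj_le hM hlam hθ₁ hθ₂)
  linarith [mul_le_mul_of_nonneg_left he hL]

theorem nuval_le_nuval_add {M Λ e : ℝ} (hM : ∀ j, |h j x| ≤ M) (hlam : |lam| ≤ Λ)
    {c₁ c₂ : Fin n → ℝ} {r₁ r₂ : ℝ} (hc₁ : c₁ ∈ simplex n) (hc₂ : c₂ ∈ simplex n)
    (hr₁ : 0 ≤ r₁) (hr₂ : 0 ≤ r₂) (he : ‖c₁ - c₂‖ + |r₁ - r₂| ≤ e) :
    nuval h lam x c₁ r₁ ≤ nuval h lam x c₂ r₂ + n * (M + 2 * Λ) * e := by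
  refine csSup_le (Set.Nonempty.image _ ⟨c₁, mem_amb_self hc₁ hr₁⟩) ?_
  rintro _ ⟨θ, hθ, rfl⟩
  obtain ⟨θ', hθ', hθ'θ⟩ := exists_mem_amb_norm_sub_le hc₂ hr₂ hθ
  have := obj_le_obj_add hM hlam hθ.2 hθ'.2 ((norm_sub_rev θ θ').trans_le (hθ'θ.trans he))
  linarith [obj_le_nuval (h := h) (lam := lam) (x := x) hθ']

theorem le_rpow_inv_of_mul_rpow_le {γ p τ a : ℝ} (hγ : 0 < γ) (hp : 0 < p) (hτ : 0 ≤ τ)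
    (hτa : γ * τ ^ p ≤ a) : τ ≤ (a / γ) ^ p⁻¹ := by
  have hτp : 0 ≤ γ * τ ^ p := mul_nonneg hγ.le (Real.rpow_nonneg hτ p)
  rw [Real.le_rpow_inv_iff_of_pos hτ (div_nonneg (hτp.trans hτa) hγ.le) hp, le_div_iff₀ hγ]
  linarith

theorem mul_rpow_infDist_argmaxSet_le {γ p r : ℝ} {c θ : Fin n → ℝ}
    (hgrow : ∀ τ : ℝ, 0 ≤ τ → ENNReal.ofReal (γ * τ ^ p) ≤ psiLow h lam x c r τ)
    (hθ : θ ∈ amb c r) :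
    γ * Metric.infDist θ (argmaxSet h lam x c r) ^ p ≤ nuval h lam x c r - obj h lam x θ :=
  (ENNReal.ofReal_le_ofReal_iff (sub_nonneg.2 (obj_le_nuval hθ))).1 <|
    (hgrow _ Metric.infDist_nonneg).trans (iInf₂_le θ ⟨hθ, le_rfl⟩)

theorem exists_mem_argmaxSet_norm_sub_le {M Λ γ p e : ℝ} (hM : ∀ j, |h j x| ≤ M)
    (hlam : |lam| ≤ Λ) (hγ : 0 < γ) (hp : 0 < p) {c₁ c₂ θ : Fin n → ℝ} {r₁ r₂ : ℝ}
    (hc₁ : c₁ ∈ simplex n) (hc₂ : c₂ ∈ simplex n) (hr₁ : 0 ≤ r₁) (hr₂ : 0 ≤ r₂)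
    (he : ‖c₁ - c₂‖ + |r₁ - r₂| ≤ e)
    (hgrow : ∀ τ : ℝ, 0 ≤ τ → ENNReal.ofReal (γ * τ ^ p) ≤ psiLow h lam x c₂ r₂ τ)
    (hθ : θ ∈ argmaxSet h lam x c₁ r₁) :
    ∃ θs ∈ argmaxSet h lam x c₂ r₂, ‖θs - θ‖ ≤ (2 * (n * (M + 2 * Λ)) * e / γ) ^ p⁻¹ + e := by
  obtain ⟨θ', hθ', hθ'θ⟩ := exists_mem_amb_norm_sub_le hc₂ hr₂ hθ.1
  replace hθ'θ := hθ'θ.trans he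
  -- both the optimal value and the objective move by at most `Le`
  have hgap : nuval h lam x c₂ r₂ - obj h lam x θ' ≤ 2 * (n * (M + 2 * Λ)) * e := by
    have hν := nuval_le_nuval_add hM hlam hc₂ hc₁ hr₂ hr₁
      (by rwa [norm_sub_rev, abs_sub_comm] : ‖c₂ - c₁‖ + |r₂ - r₁| ≤ e)
    have hobj := obj_le_obj_add hM hlam hθ.1.2 hθ'.2 ((norm_sub_rev θ θ').trans_le hθ'θ)
    linarith [hθ.2]
  obtain ⟨θs, hθs, hdist⟩ := (isCompact_argmaxSet c₂ r₂).exists_infDist_eq_dist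
    (argmaxSet_nonempty hc₂ hr₂) θ'
  have hτ := le_rpow_inv_of_mul_rpow_le hγ hp Metric.infDist_nonneg
    ((mul_rpow_infDist_argmaxSet_le hgrow hθ').trans hgap)
  refine ⟨θs, hθs, ?_⟩
  calc ‖θs - θ‖ ≤ ‖θs - θ'‖ + ‖θ' - θ‖ := norm_sub_le_norm_sub_add_norm_sub _ _ _
    _ = Metric.infDist θ' (argmaxSet h lam x c₂ r₂) + ‖θ' - θ‖ := by
        rw [hdist, dist_eq_norm, norm_sub_rev]
    _ ≤ _ := add_le_add hτ hθ'θ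

end LowerLevel

section SolutionSet

variable {G : Fin n → (Fin d → ℝ) → Fin d → ℝ} {h : Fin n → (Fin d → ℝ) → ℝ} {lam : ℝ}
  {X : Set (Fin d → ℝ)} {x : Fin d → ℝ}

theorem resid_le {M : ℝ} (hM0 : 0 ≤ M) (hMG : ∀ j i, |G j x i| ≤ M) {θ θ' : Fin n → ℝ}
    (hθ' : ∀ y ∈ X, 0 ≤ ∑ i, (∑ j, θ' j * G j x i) * (y i - x i)) :
    resid G X x θ ≤ n * M * ‖θ - θ'‖ := by
  have hnormal : (fun i => -∑ j, θ' j * G j x i) ∈ normalCone X x := fun y hy => by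
    simpa only [neg_mul, Finset.sum_neg_distrib, neg_nonpos] using hθ' y hy
  refine (Metric.infDist_le_dist_of_mem (mem_image_of_mem _ hnormal)).trans ?_
  rw [dist_zero_left]
  refine (pi_norm_le_iff_of_nonneg (by positivity)).2 fun i => ?_
  have hcoord : ∑ j, θ j * G j x i + -∑ j, θ' j * G j x i = ∑ j, (θ j - θ' j) * G j x i := by
    rw [← sub_eq_add_neg, ← Finset.sum_sub_distrib]
    exact Finset.sum_congr rfl fun j _ => by ring
  simpa only [Pi.add_apply, hcoord, Real.norm_eq_abs] using abs_sum_sub_mul_le (hMG · i)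

theorem mul_rpow_infDist_solSet_le {γ p r : ℝ} {c θ : Fin n → ℝ}
    (hgrow : ∀ τ : ℝ, 0 ≤ τ → ENNReal.ofReal (γ * τ ^ p) ≤ psiSol G h lam X c r τ)
    (hx : x ∈ X) (hθ : θ ∈ argmaxSet h lam x c r) :
    γ * Metric.infDist x (solSet G h lam X c r) ^ p ≤ resid G X x θ :=
  (ENNReal.ofReal_le_ofReal_iff Metric.infDist_nonneg).1 <|
    (hgrow _ Metric.infDist_nonneg).trans
      ((iInf₂_le x ⟨hx, le_rfl⟩).trans (iInf₂_le θ hθ))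

theorem infDist_solSet_le_of_mem_solSet {M Λ γ p γ' p' e : ℝ} (hM : ∀ j, |h j x| ≤ M)
    (hMG : ∀ j i, |G j x i| ≤ M) (hlam : |lam| ≤ Λ) (hγ : 0 < γ) (hp : 0 < p) (hγ' : 0 < γ')
    (hp' : 0 < p') {c₁ c₂ : Fin n → ℝ} {r₁ r₂ : ℝ} (hc₁ : c₁ ∈ simplex n)
    (hc₂ : c₂ ∈ simplex n) (hr₁ : 0 ≤ r₁) (hr₂ : 0 ≤ r₂) (he : ‖c₁ - c₂‖ + |r₁ - r₂| ≤ e)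
    (hgrowLow : ∀ τ : ℝ, 0 ≤ τ → ENNReal.ofReal (γ * τ ^ p) ≤ psiLow h lam x c₂ r₂ τ)
    (hgrowSol : ∀ τ : ℝ, 0 ≤ τ → ENNReal.ofReal (γ' * τ ^ p') ≤ psiSol G h lam X c₂ r₂ τ)
    (hx : x ∈ solSet G h lam X c₁ r₁) :
    Metric.infDist x (solSet G h lam X c₂ r₂) ≤
      (n * M * ((2 * (n * (M + 2 * Λ)) * e / γ) ^ p⁻¹ + e) / γ') ^ p'⁻¹ := by
  obtain ⟨hxX, θ, hθ, hθVI⟩ := hx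
  obtain ⟨θs, hθs, hθsθ⟩ :=
    exists_mem_argmaxSet_norm_sub_le hM hlam hγ hp hc₁ hc₂ hr₁ hr₂ he hgrowLow hθ
  have hM0 : 0 ≤ M := (abs_nonneg _).trans (hM ⟨0, pos_of_mem_simplex hc₁⟩)
  refine le_rpow_inv_of_mul_rpow_le hγ' hp' Metric.infDist_nonneg ?_
  calc γ' * Metric.infDist x (solSet G h lam X c₂ r₂) ^ p' ≤ resid G X x θs :=
        mul_rpow_infDist_solSet_le hgrowSol hxX hθs
    _ ≤ n * M * ‖θs - θ‖ := resid_le hM0 hMG hθVI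
    _ ≤ _ := by gcongr

end SolutionSet

end

theorem contaminated_solSet_convergence_general {n d : ℕ}
    (X : Set (Fin d → ℝ))
    (G : Fin n → (Fin d → ℝ) → Fin d → ℝ) (h : Fin n → (Fin d → ℝ) → ℝ)
    (M : ℝ) (hM : ∀ j, ∀ x ∈ X, |h j x| ≤ M) (hMG : ∀ j, ∀ x ∈ X, ∀ i, |G j x i| ≤ M)
    (θc : Fin n → ℝ) (hθc : θc ∈ simplex n) (rc : ℝ) (hrc : rc ∈ Set.Icc (0 : ℝ) 1)
    (lam0 : ℝ)
    (p γ p' γ' : ℝ) (hp : 1 ≤ p) (hγ : 0 < γ) (hp' : 1 ≤ p') (hγ' : 0 < γ')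
    (hgrowc : ∀ lam : ℝ, lam ∈ Set.Ioc 0 lam0 → ∀ x ∈ X, ∀ τ : ℝ, 0 ≤ τ →
      ENNReal.ofReal (γ * τ ^ p) ≤ psiLow h lam x θc rc τ)
    (hgrowSol : ∀ lam : ℝ, lam ∈ Set.Ioc 0 lam0 → ∀ τ : ℝ, 0 ≤ τ →
      ENNReal.ofReal (γ' * τ ^ p') ≤ psiSol G h lam X θc rc τ) :
    ∀ (lamk : ℕ → ℝ) (θk : ℕ → Fin n → ℝ) (rk : ℕ → ℝ),
      (∀ k, lamk k ∈ Set.Ioc 0 lam0) → Tendsto lamk atTop (nhds 0) →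
      (∀ k, θk k ∈ simplex n) → Tendsto (fun k => ‖θk k - θc‖) atTop (nhds 0) →
      (∀ k, rk k ∈ Set.Icc (0 : ℝ) 1) → Tendsto rk atTop (nhds rc) →
      (∀ k, ∀ x ∈ X, ∀ τ : ℝ, 0 ≤ τ →
        ENNReal.ofReal (γ * τ ^ p) ≤ psiLow h (lamk k) x (θk k) (rk k) τ) →
      ∀ ε : ℝ, 0 < ε → ∃ K : ℕ, ∀ k ≥ K,
        ∀ x ∈ solSet G h (lamk k) X (θk k) (rk k),
          Metric.infDist x (solSet G h (lamk k) X θc rc) ≤ ε := by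
  intro lamk θk rk hlamk _ hθk hθconv hrk hrconv _ ε hε
  have hp0 : 0 < p := by linarith
  have hp'0 : 0 < p' := by linarith
  set e : ℕ → ℝ := fun k => ‖θk k - θc‖ + |rk k - rc|
  set rate : ℝ → ℝ := fun t =>
    (n * M * ((2 * (n * (M + 2 * lam0)) * t / γ) ^ p⁻¹ + t) / γ') ^ p'⁻¹
  have hdist : ∀ k, ∀ x ∈ solSet G h (lamk k) X (θk k) (rk k),
      Metric.infDist x (solSet G h (lamk k) X θc rc) ≤ rate (e k) := fun k x hx =>
    infDist_solSet_le_of_mem_solSet (hM · x hx.1) (hMG · x hx.1)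
      (by rw [abs_of_pos (hlamk k).1]; exact (hlamk k).2) hγ hp0 hγ' hp'0 (hθk k) hθc
      (hrk k).1 hrc.1 le_rfl (hgrowc _ (hlamk k) x hx.1) (hgrowSol _ (hlamk k)) hx
  have he : Tendsto e atTop (nhds 0) := by
    simpa using hθconv.add (hrconv.sub_const rc).abs
  have hrate : Tendsto (fun k => rate (e k)) atTop (nhds 0) := by
    have hlow := ((he.const_mul (2 * (n * (M + 2 * lam0)))).div_const γ).rpow_const
      (Or.inr (inv_nonneg.2 hp0.le))
    have hsol := (((hlow.add he).const_mul (n * M)).div_const γ').rpow_const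
      (Or.inr (inv_nonneg.2 hp'0.le))
    simpa [Real.zero_rpow, hp0.ne', hp'0.ne'] using hsol
  obtain ⟨K, hK⟩ := eventually_atTop.1 (hrate.eventually (eventually_le_nhds hε))
  exact ⟨K, fun k hk x hx => (hdist k x hx).trans (hK k hk)⟩

/-- Theorem 4.10 (deterministic form): the deviation of the contaminated regularized
solution set from the true regularized solution set vanishes as the contamination,
estimation error and regularization parameter vanish. -/
theorem contaminated_solSet_convergence {n d : ℕ} (hn : 1 ≤ n) (hd : 1 ≤ d)
    (X : Set (Fin d → ℝ)) (hXne : X.Nonempty) (hXcomp : IsCompact X) (hXconv : Convex ℝ X)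
    (G : Fin n → (Fin d → ℝ) → Fin d → ℝ) (h : Fin n → (Fin d → ℝ) → ℝ)
    (hGLip : ∀ j, ∃ LG : ℝ, ∀ x ∈ X, ∀ y ∈ X, ‖G j x - G j y‖ ≤ LG * ‖x - y‖)
    (hhLip : ∀ j, ∃ Lh : ℝ, ∀ x ∈ X, ∀ y ∈ X, |h j x - h j y| ≤ Lh * ‖x - y‖)
    (M : ℝ) (hM : ∀ j, ∀ x ∈ X, |h j x| ≤ M) (hMG : ∀ j, ∀ x ∈ X, ∀ i, |G j x i| ≤ M)
    (θc : Fin n → ℝ) (hθc : θc ∈ simplex n) (rc : ℝ) (hrc : rc ∈ Set.Icc (0 : ℝ) 1)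
    (lam0 : ℝ) (hlam0 : 0 < lam0)
    (p γ p' γ' : ℝ) (hp : 1 ≤ p) (hγ : 0 < γ) (hp' : 1 ≤ p') (hγ' : 0 < γ')
    (hgrowc : ∀ lam : ℝ, lam ∈ Set.Ioc 0 lam0 → ∀ x ∈ X, ∀ τ : ℝ, 0 ≤ τ →
      ENNReal.ofReal (γ * τ ^ p) ≤ psiLow h lam x θc rc τ)
    (hgrowSol : ∀ lam : ℝ, lam ∈ Set.Ioc 0 lam0 → ∀ τ : ℝ, 0 ≤ τ →
      ENNReal.ofReal (γ' * τ ^ p') ≤ psiSol G h lam X θc rc τ) :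
    ∀ (lamk : ℕ → ℝ) (θk : ℕ → Fin n → ℝ) (rk : ℕ → ℝ),
      (∀ k, lamk k ∈ Set.Ioc 0 lam0) → Tendsto lamk atTop (nhds 0) →
      (∀ k, θk k ∈ simplex n) → Tendsto (fun k => ‖θk k - θc‖) atTop (nhds 0) →
      (∀ k, rk k ∈ Set.Icc (0 : ℝ) 1) → Tendsto rk atTop (nhds rc) →
      (∀ k, ∀ x ∈ X, ∀ τ : ℝ, 0 ≤ τ →
        ENNReal.ofReal (γ * τ ^ p) ≤ psiLow h (lamk k) x (θk k) (rk k) τ) →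
      ∀ ε : ℝ, 0 < ε → ∃ K : ℕ, ∀ k ≥ K,
        ∀ x ∈ solSet G h (lamk k) X (θk k) (rk k),
          Metric.infDist x (solSet G h (lamk k) X θc rc) ≤ ε :=
  contaminated_solSet_convergence_general X G h M hM hMG θc hθc rc hrc lam0 p γ p' γ' hp hγ hp' hγ'
    hgrowc hgrowSol
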